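/- arXiv:math/0101128 — 3 statements merged into one kernel-verified Lean document; each statement's English description precedes it below -/
import Mathlib

section
/- For the doubling map, the points x_n with binary expansion 0 1^{2n+1} 0^∞ (a 0, then 2n+1 ones, then all zeros) are not in the even shift, but every point of their forward orbit other than x_n itself has coding in the even shift; moreover the points y_n = 0 1^{2n} 0^∞ lie in the even shift and satisfy x_{n-1} < y_n < x_n as real numbers. -/
/-!
Both `x_n` and `y_n` are a `0` followed by a single block of `L` ones (`L = 2n+1`, resp. `2n`).
Such a sequence contains exactly one maximal block of ones between two zeros, of length `L`,
so it lies in the even shift iff `L` is even. Once the leading `0` is shifted away, no `1`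
follows a `0` any more, so no block of ones is enclosed by zeros and the constraint is void.
Finally the value of the block of length `L` is `1/2 - 2^{-(L+1)}`, which increases with `L`.
-/

/-- The one-sided even shift: every maximal block of `1`s lying between two `0`s
has even length. -/
def EvenShiftPlus : Set (ℕ → Fin 2) :=
  {s | ∀ i j : ℕ, i < j → s i = 0 → s j = 0 →
    (∀ k, i < k → k < j → s k = 1) → Even (j - i - 1)}

/-- The real number with binary expansion `s`. -/
noncomputable def binVal (s : ℕ → Fin 2) : ℝ := ∑' i : ℕ, (s i : ℝ) / 2 ^ (i + 1)

/-- The sequence `0 1^(2n+1) 0^∞`. -/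
def seqX (n : ℕ) : ℕ → Fin 2 := fun i => if 1 ≤ i ∧ i ≤ 2 * n + 1 then 1 else 0

/-- The sequence `0 1^(2n) 0^∞`. -/
def seqY (n : ℕ) : ℕ → Fin 2 := fun i => if 1 ≤ i ∧ i ≤ 2 * n then 1 else 0

open Finset

def block (L : ℕ) : ℕ → Fin 2 := fun i => if 1 ≤ i ∧ i ≤ L then 1 else 0

lemma seqX_eq_block (n : ℕ) : seqX n = block (2 * n + 1) := rfl

lemma seqY_eq_block (n : ℕ) : seqY n = block (2 * n) := rfl

lemma block_eq_zero_iff {L i : ℕ} : block L i = 0 ↔ i = 0 ∨ L < i := by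
  unfold block
  split_ifs with h <;> simp only [one_ne_zero, false_iff, true_iff] <;> omega

lemma block_mem_evenShiftPlus_iff {L : ℕ} : block L ∈ EvenShiftPlus ↔ Even L := by
  constructor
  · intro h
    simpa using h 0 (L + 1) (by omega) (block_eq_zero_iff.2 (.inl rfl))
      (block_eq_zero_iff.2 (.inr (by omega)))
      (fun k hk hkL => by simp only [block]; rw [if_pos ⟨hk, by omega⟩])
  · intro hL i j hij hi hj hblock
    rw [block_eq_zero_iff] at hi hj
    -- the first `1` after a zero at `i` sits at `i + 1`, so either `j = i + 1` or `i = 0, j = L + 1`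
    have hnext (k : ℕ) (hik : i < k) (hkj : k < j) : 1 ≤ k ∧ k ≤ L := by
      have := hblock k hik hkj
      unfold block at this
      split_ifs at this with h
      · exact h
      · exact absurd this (by decide)
    rcases Nat.lt_or_ge (i + 1) j with hlt | hge
    · have h1 := hnext (i + 1) (by omega) hlt
      obtain rfl : j = L + 1 := by
        rcases hj with hj | hj
        · omega
        · by_contra hne
          have := hnext (L + 1) (by omega) (by omega)
          omega
      obtain rfl : i = 0 := by omega
      simpa using hL
    · obtain rfl : j = i + 1 := by omega
      simp

lemma mem_evenShiftPlus_of_forall_eq_zero {s : ℕ → Fin 2}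
    (hs : ∀ i, s i = 0 → s (i + 1) = 0) : s ∈ EvenShiftPlus := by
  intro i j hij hi _ hblock
  rcases Nat.lt_or_ge (i + 1) j with hlt | hge
  · have := hblock (i + 1) (by omega) hlt
    rw [hs i hi] at this
    exact absurd this (by decide)
  · obtain rfl : j = i + 1 := by omega
    simp

lemma block_shift_mem_evenShiftPlus (L : ℕ) {k : ℕ} (hk : 1 ≤ k) :
    (fun i => block L (i + k)) ∈ EvenShiftPlus :=
  mem_evenShiftPlus_of_forall_eq_zero fun i hi => by
    rw [block_eq_zero_iff] at hi ⊢
    omega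

lemma sum_range_half_pow_add_two (L : ℕ) :
    ∑ i ∈ range L, (1 / 2 : ℝ) ^ (i + 2) = 1 / 2 - (1 / 2) ^ (L + 1) := by
  induction L with
  | zero => norm_num
  | succ L ih => rw [sum_range_succ, ih]; ring

lemma binVal_block (L : ℕ) : binVal (block L) = 1 / 2 - (1 / 2) ^ (L + 1) := by
  unfold binVal
  rw [tsum_eq_sum (s := range (L + 1)) fun i hi => by
        rw [block_eq_zero_iff.2 (.inr (by simpa using hi))]; simp,
    sum_range_succ', ← sum_range_half_pow_add_two]
  refine (add_eq_left.2 (by simp [block])).trans (sum_congr rfl fun i hi => ?_)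
  rw [mem_range] at hi
  simp only [block, if_pos (⟨by omega, by omega⟩ : 1 ≤ i + 1 ∧ i + 1 ≤ L)]
  simp [div_eq_mul_inv, ← inv_pow]

lemma binVal_block_strictMono : StrictMono fun L => binVal (block L) :=
  strictMono_nat_of_lt_succ fun L => by
    simp only [binVal_block]
    have := pow_lt_pow_right_of_lt_one₀ (by norm_num : (0 : ℝ) < 1 / 2)
      (by norm_num : (1 / 2 : ℝ) < 1) (Nat.lt_add_one (L + 1))
    linarith

/-- the points `x_n = 0 1^(2n+1) 0^∞` are not in the even shift, but every
point of their forward orbit other than `x_n` itself (i.e. every proper shift of the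
sequence) lies in the even shift; the points `y_n = 0 1^(2n) 0^∞` lie in the even shift
and satisfy `x_(n-1) < y_n < x_n` as real numbers. -/
theorem xn_yn_even_shift (n : ℕ) (hn : 1 ≤ n) :
    seqX n ∉ EvenShiftPlus ∧
    (∀ k : ℕ, 1 ≤ k → (fun i => seqX n (i + k)) ∈ EvenShiftPlus) ∧
    seqY n ∈ EvenShiftPlus ∧
    binVal (seqX (n - 1)) < binVal (seqY n) ∧
    binVal (seqY n) < binVal (seqX n) := by
  simp only [seqX_eq_block, seqY_eq_block]
  refine ⟨fun h => Nat.not_even_two_mul_add_one n (block_mem_evenShiftPlus_iff.1 h),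
    fun k hk => block_shift_mem_evenShiftPlus _ hk,
    block_mem_evenShiftPlus_iff.2 (even_two_mul n),
    binVal_block_strictMono (by omega), binVal_block_strictMono (by omega)⟩
end

section
/- Let f be an Axiom A diffeomorphism with proper generating Markov partition P and open hole H with compact boundary, and set H^(n) := int(⋃{P ∈ P^(n) : P ∩ cl(H) ≠ ∅}) where P^(n) = ⋁_{i=−n}^{n} fⁱP. Then the H^(n) form a decreasing sequence of open sets with ⋂_n H^(n) = cl(H), and the corresponding exclusion systems satisfy Σ^(1) ⊂ Σ^(2) ⊂ ⋯ with closure of the union contained in Σ_H. -/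
/-- An abstract model of an Axiom A diffeomorphism of a compact manifold equipped with
a proper generating Markov partition `P` (indexed by `Fin N`). -/
structure MarkovSystem where
  M : Type
  [ms : MetricSpace M]
  [cs : CompactSpace M]
  f : Equiv.Perm M
  f_cont : Continuous f
  f_symm_cont : Continuous f.symm
  N : ℕ
  P : Fin N → Set M
  proper : ∀ i, P i = closure (interior (P i))
  cover : (⋃ i, P i) = Set.univ
  generating : ∀ ε > 0, ∃ n : ℕ, ∀ c : ℤ → Fin N,
    Metric.diam {x : M | ∀ i ∈ Finset.Icc (-(n : ℤ)) (n : ℤ), (f ^ i) x ∈ P (c i)} ≤ ε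

attribute [instance] MarkovSystem.ms MarkovSystem.cs

namespace MarkovSystem

variable (S : MarkovSystem)

/-- An element of the refined Markov partition `P⁽ⁿ⁾ = ⋁_{i=-n}^n fⁱP`, given by the
itinerary `c` on the time window `[-n, n]`. -/
def cell (n : ℕ) (c : ℤ → Fin S.N) : Set S.M :=
  {x : S.M | ∀ i ∈ Finset.Icc (-(n : ℤ)) (n : ℤ), (S.f ^ i) x ∈ S.P (c i)}

/-- The points whose full orbit (forward and backward) avoids the hole `H`. -/
def survivors (H : Set S.M) : Set S.M := {p | ∀ k : ℤ, (S.f ^ k) p ∉ H}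

/-- The nonwandering points of the system restricted to the survivor set. -/
def exclOmega (H : Set S.M) : Set S.M :=
  {p | p ∈ S.survivors H ∧ ∀ U : Set S.M, IsOpen U → p ∈ U →
    ∃ n : ℕ, 0 < n ∧ ∃ q ∈ U ∩ S.survivors H, (S.f ^ (n : ℤ)) q ∈ U}

/-- The exclusion subshift `Σ_H`: the symbolic codings (with respect to the Markov
partition) of the nonwandering points whose full orbit avoids `H`. -/
def exclShift (H : Set S.M) : Set (ℤ → Fin S.N) :=
  {c | ∃ p ∈ S.exclOmega H, ∀ i : ℤ, (S.f ^ i) p ∈ S.P (c i)}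

end MarkovSystem

/-- A subshift of finite type: a set of bi-infinite sequences defined by a finite set
of allowed words of some fixed length `m`. -/
def IsSFT {A : Type*} (Sig : Set (ℤ → A)) : Prop :=
  ∃ (m : ℕ) (W : Set (Fin m → A)), W.Finite ∧
    Sig = {s | ∀ k : ℤ, (fun j : Fin m => s (k + (j : ℤ))) ∈ W}

/-- The Markov approximation of the hole from outside: the interior of the union of all
elements of `P⁽ⁿ⁾` meeting the closure of `H`. -/
def MarkovSystem.holeApprox (S : MarkovSystem) (H : Set S.M) (n : ℕ) : Set S.M :=
  interior (⋃ c ∈ {c : ℤ → Fin S.N | (S.cell n c ∩ closure H).Nonempty}, S.cell n c)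

/-! The cells of `P⁽ⁿ⁾` form a finite cover of `M` by closed sets, so the cells missing `cl H`
have a closed union whose complement is an open neighbourhood of `cl H` inside `H⁽ⁿ⁾`. Cells
shrink as `n` grows and, `P` being generating, their diameters tend to `0`; hence the `H⁽ⁿ⁾`
decrease to `cl H`. Enlarging the hole shrinks the exclusion system, which gives the monotonicity
of `Σ⁽ⁿ⁾` and `Σ⁽ⁿ⁾ ⊆ Σ_H`. Finally `Σ_H` is closed: the survivor set of an open hole is closed,
hence so is its nonwandering part, and a limit of codings of its points codes, by compactness,
a limit point of these points. -/

lemma isClosed_biUnion_of_finite_range {ι X : Type*} [TopologicalSpace X] {F : ι → Set X}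
    (hF : (Set.range F).Finite) (hFc : ∀ i, IsClosed (F i)) (s : Set ι) :
    IsClosed (⋃ i ∈ s, F i) := by
  simpa only [Set.biUnion_image, id] using
    (hF.subset (Set.image_subset_range F s)).isClosed_biUnion (f := id)
      (Set.forall_mem_image.2 fun i _ => hFc i)

namespace MarkovSystem

variable (S : MarkovSystem)

lemma continuous_zpow (i : ℤ) : Continuous ⇑(S.f ^ i) := by
  induction i using Int.induction_on with
  | zero => exact continuous_id
  | succ i ih =>
    rw [zpow_add_one, Equiv.Perm.coe_mul]
    exact ih.comp S.f_cont
  | pred i ih =>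
    rw [zpow_sub_one, Equiv.Perm.coe_mul, Equiv.Perm.inv_def]
    exact ih.comp S.f_symm_cont

lemma isClosed_P (j : Fin S.N) : IsClosed (S.P j) := by
  rw [S.proper j]
  exact isClosed_closure

lemma cell_eq_biInter (n : ℕ) (c : ℤ → Fin S.N) :
    S.cell n c = ⋂ i ∈ Finset.Icc (-(n : ℤ)) n, (S.f ^ i) ⁻¹' S.P (c i) := by
  ext x
  simp [cell]

lemma isClosed_cell (n : ℕ) (c : ℤ → Fin S.N) : IsClosed (S.cell n c) := by
  rw [S.cell_eq_biInter]
  exact isClosed_biInter fun i _ => (S.isClosed_P (c i)).preimage (S.continuous_zpow i)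

lemma cell_antitone (c : ℤ → Fin S.N) : Antitone (S.cell · c) := by
  intro m n hmn x hx i hi
  refine hx i ?_
  rw [Finset.mem_Icc] at hi ⊢
  omega

lemma finite_range_cell (n : ℕ) : (Set.range (S.cell n)).Finite := by
  let cellOn (d : Finset.Icc (-(n : ℤ)) n → Fin S.N) : Set S.M :=
    {x | ∀ i (hi : i ∈ Finset.Icc (-(n : ℤ)) n), (S.f ^ i) x ∈ S.P (d ⟨i, hi⟩)}
  refine (Set.finite_range cellOn).subset ?_
  rintro _ ⟨c, rfl⟩
  exact ⟨fun i => c i, rfl⟩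

lemma exists_mem_cell (n : ℕ) (x : S.M) : ∃ c, x ∈ S.cell n c := by
  have hcover (i : ℤ) : ∃ j, (S.f ^ i) x ∈ S.P j :=
    Set.mem_iUnion.mp (S.cover ▸ Set.mem_univ _)
  choose c hc using hcover
  exact ⟨c, fun i _ => hc i⟩

lemma closure_subset_holeApprox (H : Set S.M) (n : ℕ) : closure H ⊆ S.holeApprox H n := by
  set far := ⋃ c ∈ {c | S.cell n c ∩ closure H = ∅}, S.cell n c
  have hfar : IsClosed far :=
    isClosed_biUnion_of_finite_range (S.finite_range_cell n) (S.isClosed_cell n) _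
  have hnear : farᶜ ⊆ ⋃ c ∈ {c | (S.cell n c ∩ closure H).Nonempty}, S.cell n c := by
    intro x hx
    obtain ⟨c, hxc⟩ := S.exists_mem_cell n x
    refine Set.mem_biUnion (Set.nonempty_iff_ne_empty.2 fun hc => hx ?_) hxc
    exact Set.mem_biUnion hc hxc
  have hclosure : closure H ⊆ farᶜ := by
    intro x hx hxfar
    obtain ⟨c, hc, hxc⟩ := Set.mem_iUnion₂.mp hxfar
    exact (Set.eq_empty_iff_forall_notMem.mp hc) x ⟨hxc, hx⟩
  exact hclosure.trans (interior_maximal hnear hfar.isOpen_compl)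

lemma holeApprox_antitone (H : Set S.M) : Antitone (S.holeApprox H) := by
  intro m n hmn
  refine interior_mono (Set.iUnion₂_subset fun c hc => ?_)
  have hc' : (S.cell m c ∩ closure H).Nonempty :=
    hc.mono (Set.inter_subset_inter_left _ (S.cell_antitone c hmn))
  exact (S.cell_antitone c hmn).trans (Set.subset_biUnion_of_mem (u := (S.cell m ·)) hc')

lemma iInter_holeApprox (H : Set S.M) : ⋂ n, S.holeApprox H n = closure H := by
  refine (Set.subset_iInter (S.closure_subset_holeApprox H)).antisymm' fun x hx => ?_
  by_contra hxH
  obtain ⟨δ, hδ, hball⟩ := Metric.isOpen_iff.mp isClosed_closure.isOpen_compl x hxH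
  obtain ⟨n, hn⟩ := S.generating (δ / 2) (half_pos hδ)
  obtain ⟨c, ⟨y, hyc, hyH⟩, hxc⟩ :=
    Set.mem_iUnion₂.mp (interior_subset (Set.mem_iInter.mp hx n))
  have hxy : dist y x ≤ δ / 2 :=
    (Metric.dist_le_diam_of_mem Metric.isBounded_of_compactSpace hyc hxc).trans (hn c)
  exact hball (Metric.mem_ball.2 (by linarith)) hyH

lemma survivors_anti {H₁ H₂ : Set S.M} (h : H₁ ⊆ H₂) : S.survivors H₂ ⊆ S.survivors H₁ :=
  fun _ hp k hk => hp k (h hk)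

lemma exclShift_anti {H₁ H₂ : Set S.M} (h : H₁ ⊆ H₂) : S.exclShift H₂ ⊆ S.exclShift H₁ := by
  rintro c ⟨p, ⟨hps, hpω⟩, hpc⟩
  refine ⟨p, ⟨S.survivors_anti h hps, fun U hU hpU => ?_⟩, hpc⟩
  obtain ⟨n, hn, q, ⟨hqU, hqs⟩, hq⟩ := hpω U hU hpU
  exact ⟨n, hn, q, ⟨hqU, S.survivors_anti h hqs⟩, hq⟩

lemma isClosed_survivors {H : Set S.M} (hH : IsOpen H) : IsClosed (S.survivors H) := by
  have : S.survivors H = ⋂ k : ℤ, (S.f ^ k) ⁻¹' Hᶜ := by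
    ext p
    simp [survivors]
  rw [this]
  exact isClosed_iInter fun k => hH.isClosed_compl.preimage (S.continuous_zpow k)

lemma isClosed_exclOmega {H : Set S.M} (hH : IsOpen H) : IsClosed (S.exclOmega H) := by
  refine isClosed_of_closure_subset fun p hp => ⟨?_, fun U hU hpU => ?_⟩
  · exact closure_minimal (fun q hq => hq.1) (S.isClosed_survivors hH) hp
  · obtain ⟨q, hqU, hqΩ⟩ := mem_closure_iff.mp hp U hU hpU
    exact hqΩ.2 U hU hqU

lemma exists_mem_exclOmega_cell_of_mem_closure {H : Set S.M} {c : ℤ → Fin S.N}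
    (hc : c ∈ closure (S.exclShift H)) (n : ℕ) : ∃ p ∈ S.exclOmega H, p ∈ S.cell n c := by
  let agree := ⋂ i ∈ Finset.Icc (-(n : ℤ)) n, (fun d : ℤ → Fin S.N => d i) ⁻¹' {c i}
  have hagree : IsOpen agree :=
    isOpen_biInter_finset fun i _ => (isOpen_discrete _).preimage (continuous_apply i)
  obtain ⟨d, hd, p, hpΩ, hpd⟩ := mem_closure_iff.mp hc agree hagree (by simp [agree])
  refine ⟨p, hpΩ, fun i hi => ?_⟩
  rw [← show d i = c i by simpa using Set.mem_iInter₂.mp hd i hi]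
  exact hpd i

lemma isClosed_exclShift {H : Set S.M} (hH : IsOpen H) : IsClosed (S.exclShift H) := by
  refine isClosed_of_closure_subset fun c hc => ?_
  choose p hpΩ hpc using S.exists_mem_exclOmega_cell_of_mem_closure hc
  obtain ⟨q, hqΩ, φ, hφ, hpq⟩ := (S.isClosed_exclOmega hH).isCompact.tendsto_subseq hpΩ
  refine ⟨q, hqΩ, fun i => ?_⟩
  refine (S.isClosed_P (c i)).mem_of_tendsto (((S.continuous_zpow i).tendsto q).comp hpq) ?_
  filter_upwards [Filter.eventually_ge_atTop i.natAbs] with k hk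
  refine hpc (φ k) i (Finset.mem_Icc.2 ?_)
  have : k ≤ φ k := hφ.le_apply
  omega

end MarkovSystem

theorem markov_hole_approximation_general (S : MarkovSystem) (H : Set S.M)
    (hHopen : IsOpen H) :
    Antitone (fun n : ℕ => S.holeApprox H n) ∧
    (⋂ n : ℕ, S.holeApprox H n) = closure H ∧
    Monotone (fun n : ℕ => S.exclShift (S.holeApprox H n)) ∧
    closure (⋃ n : ℕ, S.exclShift (S.holeApprox H n)) ⊆ S.exclShift H := by
  refine ⟨S.holeApprox_antitone H, S.iInter_holeApprox H,
    fun m n hmn => S.exclShift_anti (S.holeApprox_antitone H hmn), ?_⟩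
  refine closure_minimal (Set.iUnion_subset fun n => ?_) (S.isClosed_exclShift hHopen)
  exact S.exclShift_anti (subset_closure.trans (S.closure_subset_holeApprox H n))

/-- the Markov approximations `H⁽ⁿ⁾` of an open hole `H` with compact
boundary form a decreasing sequence of sets whose intersection is the closure of `H`;
the corresponding exclusion systems `Σ⁽ⁿ⁾` increase, and the closure of their union is
contained in the exclusion subshift `Σ_H`. -/
theorem markov_hole_approximation (S : MarkovSystem) (H : Set S.M)
    (hHopen : IsOpen H) (hHbd : IsCompact (frontier H)) :
    Antitone (fun n : ℕ => S.holeApprox H n) ∧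
    (⋂ n : ℕ, S.holeApprox H n) = closure H ∧
    Monotone (fun n : ℕ => S.exclShift (S.holeApprox H n)) ∧
    closure (⋃ n : ℕ, S.exclShift (S.holeApprox H n)) ⊆ S.exclShift H :=
  markov_hole_approximation_general S H hHopen
end

section
/- In an interval exclusion system, every connected component (gap) G of the complement of the surviving set Ω falls into the hole coherently: all points of G first enter the enlarged hole Ĥ at the same time n and into the same component Ĥ_k. -/
/-!
A gap `G` is preconnected and misses `Ω`, so its continuous images `fᵐ '' G` are
preconnected, and as long as no point of `G` has yet entered the hole, `fᵐ '' G` misses `Ω`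
too: a point of `G` whose `m`-th image survives forever survives itself. Since
`∂Ĥₖ ⊆ Ω`, such an image cannot cross the boundary of any `Ĥₖ`, so it lies entirely inside
`Ĥₖ` as soon as it meets it. Hence the whole gap enters `Ĥ` at the same time as `z` and
into the same component.
-/

open Set Function

theorem IsPreconnected.subset_of_disjoint_frontier {X : Type*} [TopologicalSpace X]
    {s u : Set X} (hs : IsPreconnected s) (hu : IsOpen u) (hsu : (s ∩ u).Nonempty)
    (hfr : Disjoint s (frontier u)) : s ⊆ u :=
  hs.subset_of_closure_inter_subset hu hsu fun _ ⟨hxcl, hxs⟩ =>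
    ((closure_eq_self_union_frontier u ▸ hxcl).resolve_right
      (disjoint_left.mp hfr hxs))

section Survivors

variable {α : Type*} (f : α → α) (S : Set α)

def survivorSet : Set α := {x | ∀ n, f^[n] x ∉ S}

variable {f S}

theorem mem_survivorSet_of_iterate {x : α} {m : ℕ} (hm : f^[m] x ∈ survivorSet f S)
    (hpre : ∀ t < m, f^[t] x ∉ S) : x ∈ survivorSet f S := by
  intro t
  rcases lt_or_ge t m with htm | hmt
  · exact hpre t htm
  · simpa [← iterate_add_apply, Nat.sub_add_cancel hmt] using hm (t - m)

variable [TopologicalSpace α]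

theorem iterate_image_subset_of_frontier_subset_survivorSet (hf : Continuous f) {G U : Set α}
    {m : ℕ} (hG : IsPreconnected G) (hGΩ : Disjoint G (survivorSet f S)) (hU : IsOpen U)
    (hfront : frontier U ⊆ survivorSet f S) (hpre : ∀ x ∈ G, ∀ t < m, f^[t] x ∉ S)
    (hmeet : (f^[m] '' G ∩ U).Nonempty) : f^[m] '' G ⊆ U := by
  refine (hG.image _ (hf.iterate m).continuousOn).subset_of_disjoint_frontier hU hmeet ?_
  rw [disjoint_left]
  rintro _ ⟨x, hxG, rfl⟩ hx
  exact disjoint_left.mp hGΩ hxG (mem_survivorSet_of_iterate (hfront hx) (hpre x hxG))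

end Survivors

theorem gap_falls_coherently_general (f : ℝ → ℝ) (hf : Continuous f) (p r : ℕ)
    (HI : Fin p → Set ℝ)
    (Hc : Fin r → Set ℝ)
    (hHc : ∀ k, IsOpen (Hc k) ∧ (Hc k).OrdConnected)
    (Ω : Set ℝ) (hΩ : Ω = {x : ℝ | ∀ n : ℕ, f^[n] x ∉ ⋃ a, HI a})
    (hsub : (⋃ a, HI a) ⊆ ⋃ k, Hc k)
    (hfront : ∀ k, frontier (Hc k) ⊆ Ω) :
    ∀ z w : ℝ, z ∉ Ω → w ∈ connectedComponentIn Ωᶜ z →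
      ∀ (n : ℕ) (k : Fin r),
        (f^[n] z ∈ Hc k ∧ ∀ m < n, f^[m] z ∉ ⋃ j, Hc j) →
        (f^[n] w ∈ Hc k ∧ ∀ m < n, f^[m] w ∉ ⋃ j, Hc j) := by
  subst hΩ
  intro z w hz hw n k ⟨hzn, hzmin⟩
  set G := connectedComponentIn (survivorSet f (⋃ a, HI a))ᶜ z
  have hzG : z ∈ G := mem_connectedComponentIn hz
  have hG : IsPreconnected G := isPreconnected_connectedComponentIn
  have hGΩ : Disjoint G (survivorSet f (⋃ a, HI a)) :=
    subset_compl_iff_disjoint_right.mp (connectedComponentIn_subset _ _)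
  have fits : ∀ m, (∀ x ∈ G, ∀ t < m, f^[t] x ∉ ⋃ j, Hc j) → ∀ j,
      (f^[m] '' G ∩ Hc j).Nonempty → f^[m] '' G ⊆ Hc j := fun m hpre j =>
    iterate_image_subset_of_frontier_subset_survivorSet hf hG hGΩ (hHc j).1 (hfront j)
      fun x hx t ht hS => hpre x hx t ht (hsub hS)
  have avoid : ∀ m ≤ n, ∀ x ∈ G, ∀ t < m, f^[t] x ∉ ⋃ j, Hc j := by
    intro m
    induction m with
    | zero => simp
    | succ m ih =>
      intro hmn x hx t ht hxt
      obtain ⟨j, hj⟩ := mem_iUnion.mp hxt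
      rcases Nat.lt_succ_iff_lt_or_eq.mp ht with ht | rfl
      · exact ih (by omega) x hx t ht hxt
      · exact hzmin t hmn <| mem_iUnion.mpr ⟨j,
          fits t (ih (by omega)) j ⟨_, mem_image_of_mem _ hx, hj⟩ (mem_image_of_mem _ hzG)⟩
  exact ⟨fits n (avoid n le_rfl) k ⟨_, mem_image_of_mem _ hzG, hzn⟩ (mem_image_of_mem _ hw),
    avoid n le_rfl w hw⟩

/-- in an interval exclusion system, every gap (connected component `G`
of the complement of the surviving set `Ω`) falls into the enlarged hole `Ĥ = ⋃ Hc k`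
coherently: if `z` first enters `Ĥ` at time `n` into the component `Hc k`, then every
point `w` of the same component of `Ωᶜ` does likewise.

Here `f` is a continuous (circle-)Markov map, `H = ⋃ HI a` is a finite union of open
intervals, `Ω` is the set of points whose forward orbit avoids `H`, and the `Hc k` are
the maximal open intervals of the complement of `Ω` containing the components of `H`
(so `H ⊆ ⋃ Hc`, `⋃ Hc ⊆ Ωᶜ` and `∂(Hc k) ⊆ Ω`). -/
theorem gap_falls_coherently (f : ℝ → ℝ) (hf : Continuous f) (p r : ℕ)
    (HI : Fin p → Set ℝ)
    (hHI : ∀ a, IsOpen (HI a) ∧ (HI a).OrdConnected)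
    (Hc : Fin r → Set ℝ)
    (hHc : ∀ k, IsOpen (Hc k) ∧ (Hc k).OrdConnected)
    (hHcdisj : Pairwise (Function.onFun Disjoint Hc))
    (Ω : Set ℝ) (hΩ : Ω = {x : ℝ | ∀ n : ℕ, f^[n] x ∉ ⋃ a, HI a})
    (hsub : (⋃ a, HI a) ⊆ ⋃ k, Hc k)
    (hcompl : (⋃ k, Hc k) ⊆ Ωᶜ)
    (hfront : ∀ k, frontier (Hc k) ⊆ Ω) :
    ∀ z w : ℝ, z ∉ Ω → w ∈ connectedComponentIn Ωᶜ z →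
      ∀ (n : ℕ) (k : Fin r),
        (f^[n] z ∈ Hc k ∧ ∀ m < n, f^[m] z ∉ ⋃ j, Hc j) →
        (f^[n] w ∈ Hc k ∧ ∀ m < n, f^[m] w ∉ ⋃ j, Hc j) :=
  gap_falls_coherently_general f hf p r HI Hc hHc Ω hΩ hsub hfront
end
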